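/- arXiv:0805.3450 — 2 statements merged into one kernel-verified Lean document; each statement's English description precedes it below -/
import Mathlib

section
/- Let f ∈ L¹(μ) be F₀-measurable and suppose there is a constant C > 0 with |f| ≥ C almost everywhere. If the sequence of partial sums (Σ_{k=1}^n f·E(f∘T^k | F₀))_{n≥1} converges in L¹(μ), then the sequence of partial sums (Σ_{k=1}^n E(f∘T^k | F₀))_{n≥1} converges in L¹(μ). (For functions bounded away from zero, the projective criterion implies the martingale–coboundary decomposition in L¹.) -/
open MeasureTheory Filter
open scoped Topology ENNReal

/-! Since `|f| ≥ C > 0` one may divide by `f`: pointwise,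
`|∑ E(f ∘ T^k | F₀) - h / f| ≤ C⁻¹ |f · ∑ E(f ∘ T^k | F₀) - h|`, so the partial sums converge
in `L¹` to `h / f`, where `h` is the `L¹` limit of the projective sums. -/

lemma abs_sub_div_le_inv_mul_abs_mul_sub {a b c C : ℝ} (hC : 0 < C) (hc : C ≤ |c|) :
    |a - b / c| ≤ C⁻¹ * |c * a - b| := by
  have hc₀ : c ≠ 0 := abs_pos.mp (hC.trans_le hc)
  calc |a - b / c| = |c * a - b| / |c| := by rw [← abs_div, sub_div, mul_div_cancel_left₀ _ hc₀]
    _ ≤ |c * a - b| / C := div_le_div_of_nonneg_left (abs_nonneg _) hC hc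
    _ = C⁻¹ * |c * a - b| := div_eq_inv_mul _ _

lemma tendsto_eLpNorm_sub_div_of_tendsto_eLpNorm_mul_sub {α ι : Type*} {mα : MeasurableSpace α}
    {μ : Measure α} {p : ℝ≥0∞} {l : Filter ι} {f h : α → ℝ} {u : ι → α → ℝ} {C : ℝ}
    (hC : 0 < C) (hf : ∀ᵐ x ∂μ, C ≤ |f x|)
    (hu : Tendsto (fun i => eLpNorm (fun x => f x * u i x - h x) p μ) l (𝓝 0)) :
    Tendsto (fun i => eLpNorm (fun x => u i x - h x / f x) p μ) l (𝓝 0) := by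
  have hbound : ∀ i, eLpNorm (fun x => u i x - h x / f x) p μ
      ≤ ENNReal.ofReal C⁻¹ * eLpNorm (fun x => f x * u i x - h x) p μ := fun i =>
    eLpNorm_le_mul_eLpNorm_of_ae_le_mul
      (hf.mono fun _ hx => abs_sub_div_le_inv_mul_abs_mul_sub hC hx) p
  have hlim := ENNReal.Tendsto.const_mul (a := ENNReal.ofReal C⁻¹) hu
    (Or.inr ENNReal.ofReal_ne_top)
  rw [mul_zero] at hlim
  exact tendsto_of_tendsto_of_tendsto_of_le_of_le tendsto_const_nhds hlim (fun _ => zero_le)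
    hbound

theorem bounded_below_projective_criterion_implies_martingale_coboundary_L1_general
    {Ω : Type*} [m0 : MeasurableSpace Ω] (μ : Measure Ω)
    (T : Equiv.Perm Ω)
    (F₀ : MeasurableSpace Ω)
    (f : Ω → ℝ)
    (C : ℝ) (hC : 0 < C) (hfC : ∀ᵐ ω ∂μ, C ≤ |f ω|)
    (hconv : ∃ h : Ω → ℝ,
      Tendsto (fun n => eLpNorm (fun ω =>
        (∑ k ∈ Finset.Icc 1 n, f ω * (μ[fun ω' => f ((T ^ k) ω') | F₀]) ω) - h ω) 1 μ)
        atTop (𝓝 0)) :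
    ∃ g : Ω → ℝ,
      Tendsto (fun n => eLpNorm (fun ω =>
        (∑ k ∈ Finset.Icc 1 n, (μ[fun ω' => f ((T ^ k) ω') | F₀]) ω) - g ω) 1 μ)
        atTop (𝓝 0) := by
  obtain ⟨h, hh⟩ := hconv
  simp_rw [← Finset.mul_sum] at hh
  exact ⟨fun ω => h ω / f ω, tendsto_eLpNorm_sub_div_of_tendsto_eLpNorm_mul_sub hC hfC hh⟩

/-- For functions bounded away from zero, the projective criterion implies
the martingale–coboundary decomposition in L¹: if `f ∈ L¹(μ)` is `F₀`-measurable,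
`|f| ≥ C > 0` a.e., and the partial sums `∑_{k=1}^n f · E(f ∘ T^k | F₀)` converge in
`L¹(μ)`, then the partial sums `∑_{k=1}^n E(f ∘ T^k | F₀)` converge in `L¹(μ)`. -/
theorem bounded_below_projective_criterion_implies_martingale_coboundary_L1
    {Ω : Type*} [m0 : MeasurableSpace Ω] (μ : Measure Ω) [IsProbabilityMeasure μ]
    (T : Equiv.Perm Ω) (hT : Measurable T) (hTinv : Measurable T.symm)
    (hTmp : MeasurePreserving T μ μ)
    (F₀ : MeasurableSpace Ω) (hF₀le : F₀ ≤ m0)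
    (hF₀T : F₀ ≤ MeasurableSpace.comap T F₀)
    (f : Ω → ℝ) (hfmeas : StronglyMeasurable[F₀] f) (hfint : Integrable f μ)
    (C : ℝ) (hC : 0 < C) (hfC : ∀ᵐ ω ∂μ, C ≤ |f ω|)
    (hconv : ∃ h : Ω → ℝ,
      Tendsto (fun n => eLpNorm (fun ω =>
        (∑ k ∈ Finset.Icc 1 n, f ω * (μ[fun ω' => f ((T ^ k) ω') | F₀]) ω) - h ω) 1 μ)
        atTop (𝓝 0)) :
    ∃ g : Ω → ℝ,
      Tendsto (fun n => eLpNorm (fun ω =>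
        (∑ k ∈ Finset.Icc 1 n, (μ[fun ω' => f ((T ^ k) ω') | F₀]) ω) - g ω) 1 μ)
        atTop (𝓝 0) :=
  bounded_below_projective_criterion_implies_martingale_coboundary_L1_general (m0 := m0) μ T F₀ f C
    hC hfC hconv
end

section
/- Let N ∈ ℕ, 0 < ρ < 1 and ε > 0. There exists a set A ∈ 𝒞 such that μ(A) = ρ and for all i, j ∈ {0, …, N}, μ(T^{-i}A Δ T^{-j}A) ≤ ε, where Δ denotes symmetric difference. -/
/-!
Choose `B ∈ 𝒞` of small positive measure and build the Kakutani skyscraper over it: a point at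
height `j` above its last visit to `B`, with first return to `B` at time `R - j`, sits at level `j`
of the column of height `R`. Levels of a column are translates of each other by `T`, hence have
equal measure and lie in `𝒞`; by ergodicity the columns exhaust `Ω` (Kac's lemma). The union `A₀`
of the lowest `⌈ρ R⌉` levels of each column has `ρ ≤ μ A₀ ≤ ρ + μ B`, and `T` only moves points
across its boundary at the top of a column or of `A₀`, so `μ (A₀ ∆ T⁻¹ A₀) ≤ 2 μ B`. Since `μ` has
no atoms on `𝒞`, removing a `𝒞`-subset of measure `μ A₀ - ρ ≤ μ B` gives `A` with `μ A = ρ` and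
`μ (A ∆ T⁻¹ A) ≤ 4 μ B`, and the triangle inequality bounds `μ (T⁻ⁱ A ∆ T⁻ʲ A)` by `4 N μ B`.
-/

open MeasureTheory Set Function
open scoped ENNReal NNReal symmDiff

lemma ENNReal.exists_forall_le_two_mul {ι : Type*} {p : ι → Prop} {f : ι → ℝ≥0∞} {c : ℝ≥0∞}
    {i₀ : ι} (hi₀ : p i₀) (hc : c ≠ ∞) (hf : ∀ i, p i → f i ≤ c) :
    ∃ i, p i ∧ ∀ j, p j → f j ≤ 2 * f i := by
  set S := ⨆ i ∈ {i | p i}, f i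
  have hle : ∀ j, p j → f j ≤ S := fun j hj => le_iSup₂ (f := fun i (_ : i ∈ {i | p i}) => f i) j hj
  rcases eq_or_ne S 0 with hS | hS
  · exact ⟨i₀, hi₀, fun j hj => (hle j hj).trans (by simp [hS])⟩
  obtain ⟨i, hi, hlt⟩ := lt_biSup_iff.1 <|
    ENNReal.half_lt_self hS (ne_top_of_le_ne_top hc (iSup₂_le hf))
  refine ⟨i, hi, fun j hj => ?_⟩
  calc f j ≤ S := hle j hj
    _ = 2 * (S / 2) := (ENNReal.mul_div_cancel two_ne_zero ENNReal.ofNat_ne_top).symm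
    _ ≤ 2 * f i := by gcongr

section Nonatomic

variable {α : Type*} {m : MeasurableSpace α} {μ : Measure α} {C : MeasurableSpace α} {s : Set α}

def IsNonatomicOn (μ : Measure α) (C : MeasurableSpace α) : Prop :=
  ∀ s, MeasurableSet[C] s → 0 < μ s → ∃ t, MeasurableSet[C] t ∧ t ⊆ s ∧ 0 < μ t ∧ μ t < μ s

lemma exists_subset_measure_pos_two_mul_le [IsFiniteMeasure μ] (hCle : C ≤ m)
    (hCna : IsNonatomicOn μ C) (hs : MeasurableSet[C] s) (hμs : 0 < μ s) :
    ∃ t, MeasurableSet[C] t ∧ t ⊆ s ∧ 0 < μ t ∧ 2 * μ t ≤ μ s := by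
  obtain ⟨t, ht, hts, ht0, hlt⟩ := hCna s hs hμs
  rcases le_total (2 * μ t) (μ s) with h | h
  · exact ⟨t, ht, hts, ht0, h⟩
  have hdiff : μ (s \ t) = μ s - μ t :=
    measure_sdiff hts (hCle _ ht).nullMeasurableSet (measure_ne_top μ t)
  refine ⟨s \ t, hs.diff ht, sdiff_subset, by simpa [hdiff] using hlt, ?_⟩
  have hle : μ (s \ t) ≤ μ t := by
    rw [hdiff, tsub_le_iff_right, ← two_mul]; exact h
  calc 2 * μ (s \ t) ≤ μ (s \ t) + μ t := by rw [two_mul]; gcongr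
    _ = μ s := by rw [hdiff, tsub_add_cancel_of_le hlt.le]

lemma exists_subset_measure_pos_le [IsFiniteMeasure μ] (hCle : C ≤ m) (hCna : IsNonatomicOn μ C)
    (hs : MeasurableSet[C] s) (hμs : 0 < μ s) {c : ℝ≥0∞} (hc : 0 < c) :
    ∃ t, MeasurableSet[C] t ∧ t ⊆ s ∧ 0 < μ t ∧ μ t ≤ c := by
  have halve : ∀ n : ℕ, ∃ t, MeasurableSet[C] t ∧ t ⊆ s ∧ 0 < μ t ∧ 2 ^ n * μ t ≤ μ s := by
    intro n
    induction n with
    | zero => exact ⟨s, hs, subset_rfl, hμs, by simp⟩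
    | succ n ih =>
      obtain ⟨t, ht, hts, ht0, htle⟩ := ih
      obtain ⟨u, hu, hut, hu0, hule⟩ := exists_subset_measure_pos_two_mul_le hCle hCna ht ht0
      refine ⟨u, hu, hut.trans hts, hu0, ?_⟩
      calc 2 ^ (n + 1) * μ u = 2 ^ n * (2 * μ u) := by ring
        _ ≤ 2 ^ n * μ t := by gcongr
        _ ≤ μ s := htle
  obtain ⟨n, hn⟩ := ENNReal.exists_nat_mul_gt hc.ne' (measure_ne_top μ s)
  obtain ⟨t, ht, hts, ht0, htle⟩ := halve n
  refine ⟨t, ht, hts, ht0, ((ENNReal.mul_lt_mul_iff_right (a := 2 ^ n) (by positivity)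
    (by simp)).1 ?_).le⟩
  calc 2 ^ n * μ t ≤ μ s := htle
    _ < n * c := hn
    _ ≤ 2 ^ n * c := by gcongr; exact_mod_cast n.lt_two_pow_self.le

lemma exists_subset_measure_le_forall_measure_eq_zero (hCle : C ≤ m) {r : ℝ≥0∞} (hr : r ≠ ∞) :
    ∃ U, MeasurableSet[C] U ∧ U ⊆ s ∧ μ U ≤ r ∧
      ∀ D, MeasurableSet[C] D → D ⊆ s \ U → μ D ≤ r - μ U → μ D = 0 := by
  -- Greedily add to the current set `E` an admissible increment of at least half the maximal size.
  have step : ∀ E : Set α, ∃ D, (MeasurableSet[C] D ∧ D ⊆ s \ E ∧ μ D ≤ r - μ E) ∧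
      ∀ D', (MeasurableSet[C] D' ∧ D' ⊆ s \ E ∧ μ D' ≤ r - μ E) → μ D' ≤ 2 * μ D := fun E =>
    ENNReal.exists_forall_le_two_mul (f := μ) ⟨MeasurableSet.empty, empty_subset _, by simp⟩
      hr fun D hD => hD.2.2.trans tsub_le_self
  choose D hD hDmax using step
  set E : ℕ → Set α := fun n => (fun E => E ∪ D E)^[n] ∅
  have hE_succ : ∀ n, E (n + 1) = E n ∪ D (E n) := fun n => iterate_succ_apply' _ _ _
  have hE : ∀ n, MeasurableSet[C] (E n) ∧ E n ⊆ s ∧ μ (E n) ≤ r := by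
    intro n
    induction n with
    | zero => simp [E]
    | succ n ih =>
      obtain ⟨hEm, hEs, hEr⟩ := ih
      obtain ⟨hDm, hDs, hDr⟩ := hD (E n)
      rw [hE_succ]
      exact ⟨hEm.union hDm, union_subset hEs (hDs.trans sdiff_subset), (measure_union_le _ _).trans
        ((add_le_add_right hDr _).trans_eq (add_tsub_cancel_of_le hEr))⟩
  have hE_add : ∀ n, μ (E (n + 1)) = μ (E n) + μ (D (E n)) := fun n => by
    rw [hE_succ]
    exact measure_union (subset_sdiff.1 (hD (E n)).2.1).2.symm (hCle _ (hD (E n)).1)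
  refine ⟨⋃ n, E n, .iUnion fun n => (hE n).1, iUnion_subset fun n => (hE n).2.1, ?_,
    fun D₀ hD₀ hD₀s hD₀le => ?_⟩
  · rw [Monotone.measure_iUnion (monotone_nat_of_le_succ fun n => by
      rw [hE_succ]; exact subset_union_left)]
    exact iSup_le fun n => (hE n).2.2
  -- `D₀` is an admissible increment at every stage, so `E n` grows at least linearly in `μ D₀`.
  have hgrow : ∀ n, μ D₀ ≤ 2 * μ (D (E n)) := fun n =>
    hDmax (E n) D₀ ⟨hD₀, hD₀s.trans (sdiff_subset_sdiff_right (subset_iUnion E n)),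
      hD₀le.trans (tsub_le_tsub_left (measure_mono (subset_iUnion E n)) r)⟩
  have hlin : ∀ n : ℕ, n * μ D₀ ≤ 2 * μ (E n) := by
    intro n
    induction n with
    | zero => simp
    | succ n ih =>
      rw [hE_add, mul_add, Nat.cast_succ, add_mul, one_mul]
      exact add_le_add ih (hgrow n)
  by_contra hD₀0
  obtain ⟨n, hn⟩ := ENNReal.exists_nat_mul_gt (b := 2 * r) hD₀0 (by finiteness)
  exact (hn.trans_le (hlin n)).not_ge (by gcongr; exact (hE n).2.2)

/-- Sierpiński's theorem. -/
theorem exists_subset_measure_eq [IsFiniteMeasure μ] (hCle : C ≤ m) (hCna : IsNonatomicOn μ C)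
    (hs : MeasurableSet[C] s) {r : ℝ≥0∞} (hr : r ≤ μ s) :
    ∃ t, MeasurableSet[C] t ∧ t ⊆ s ∧ μ t = r := by
  obtain ⟨U, hU, hUs, hUr, hmax⟩ :=
    exists_subset_measure_le_forall_measure_eq_zero (s := s) (μ := μ) hCle
      (ne_top_of_le_ne_top (measure_ne_top μ s) hr)
  refine ⟨U, hU, hUs, le_antisymm hUr (not_lt.1 fun hlt => ?_)⟩
  obtain ⟨D, hD, hDs, hD0, hDle⟩ := exists_subset_measure_pos_le hCle hCna (hs.diff hU)
    ((tsub_pos_of_lt (hlt.trans_le hr)).trans_le le_measure_sdiff) (tsub_pos_of_lt hlt)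
  exact hD0.ne' (hmax D hD hDs hDle)

end Nonatomic

section Dynamics

variable {α : Type*} {m : MeasurableSpace α} {μ : Measure α} {f : α → α} {s t : Set α}

lemma ergodic_of_measure_eq_zero_or_one [IsProbabilityMeasure μ] (hf : MeasurePreserving f μ μ)
    (h : ∀ s, MeasurableSet s → f ⁻¹' s = s → μ s = 0 ∨ μ s = 1) : Ergodic f μ where
  toMeasurePreserving := hf
  aeconst_set s hs hfs := Filter.eventuallyConst_set'.2 <| (h s hs hfs).imp ae_eq_empty.2
    fun h1 => (ae_eq_univ_iff_measure_eq hs.nullMeasurableSet).2 (by rw [h1, measure_univ])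

lemma Ergodic.ae_exists_iterate_succ_mem [IsFiniteMeasure μ] (hf : Ergodic f μ)
    (hs : MeasurableSet s) (hs0 : μ s ≠ 0) : ∀ᵐ x ∂μ, ∃ k, f^[k + 1] x ∈ s := by
  set V := ⋃ k, f^[k + 1] ⁻¹' s
  have hV : MeasurableSet V := .iUnion fun k => hf.measurable.iterate _ hs
  have hfV : f ⁻¹' V ⊆ V := by
    simp only [V, preimage_iUnion, ← preimage_comp, ← iterate_succ]
    exact iUnion_subset fun k => subset_iUnion (fun k => f^[k + 1] ⁻¹' s) (k + 1)
  rcases hf.ae_empty_or_univ_of_preimage_ae_le hV.nullMeasurableSet hfV.eventuallyLE with h | h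
  · refine absurd (measure_mono_null (subset_iUnion _ 0) (ae_eq_empty.1 h)) ?_
    rwa [iterate_one, hf.measure_preimage hs.nullMeasurableSet]
  · exact h.mem_iff.mono fun x hx => mem_iUnion.1 (hx.2 trivial)

lemma MeasureTheory.MeasurePreserving.measure_symmDiff_preimage_sdiff_le
    (hf : MeasurePreserving f μ μ) (ht : NullMeasurableSet t μ) :
    μ ((s \ t) ∆ (f ⁻¹' (s \ t))) ≤ μ (s ∆ (f ⁻¹' s)) + 2 * μ t := by
  have hsub : (s \ t) ∆ (f ⁻¹' (s \ t)) ⊆ s ∆ (f ⁻¹' s) ∪ t ∪ f ⁻¹' t := by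
    intro x
    simp only [Set.mem_symmDiff, mem_sdiff, mem_preimage, mem_union]
    tauto
  calc μ ((s \ t) ∆ (f ⁻¹' (s \ t))) ≤ μ (s ∆ (f ⁻¹' s)) + μ t + μ (f ⁻¹' t) :=
        (measure_mono hsub).trans <|
          (measure_union_le _ _).trans (by gcongr; exact measure_union_le _ _)
    _ = μ (s ∆ (f ⁻¹' s)) + 2 * μ t := by rw [hf.measure_preimage ht, add_assoc, two_mul]

lemma MeasureTheory.MeasurePreserving.measure_symmDiff_preimage_iterate_iterate_le
    (hf : MeasurePreserving f μ μ) (hs : NullMeasurableSet s μ) {i j N : ℕ} (hi : i ≤ N)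
    (hj : j ≤ N) : μ ((f^[i] ⁻¹' s) ∆ (f^[j] ⁻¹' s)) ≤ (N : ℝ≥0∞) * μ (s ∆ (f ⁻¹' s)) := by
  wlog hij : i ≤ j generalizing i j
  · rw [symmDiff_comm]; exact this hj hi (le_of_not_ge hij)
  obtain ⟨k, rfl⟩ := Nat.exists_eq_add_of_le hij
  have hsk := hs.symmDiff (hs.preimage (hf.iterate k).quasiMeasurePreserving)
  rw [add_comm i k, iterate_add, preimage_comp, ← preimage_symmDiff,
    (hf.iterate i).measure_preimage hsk]
  refine (hf.measure_symmDiff_preimage_iterate_le hs k).trans ?_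
  rw [nsmul_eq_mul]
  gcongr
  omega

end Dynamics

section Tower

variable {α : Type*} (T : Equiv.Perm α) (B : Set α)

def lastVisitSet (j : ℕ) : Set α :=
  {x | (⇑T.symm)^[j] x ∈ B ∧ ∀ i < j, (⇑T.symm)^[i] x ∉ B}

/-- Points whose first visit to `B` at a positive time happens at time `m + 1`. -/
def firstReturnSet (m : ℕ) : Set α :=
  {x | (⇑T)^[m + 1] x ∈ B ∧ ∀ i < m, (⇑T)^[i + 1] x ∉ B}

/-- Level `j` of the column of height `R` of the Kakutani skyscraper over `B`. -/
def towerCell (R j : ℕ) : Set α :=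
  {x | j < R ∧ x ∈ lastVisitSet T B j ∧ x ∈ firstReturnSet T B (R - (j + 1))}

def towerBottom (c : ℕ → ℕ) : Set α :=
  ⋃ R, ⋃ j ∈ Finset.range (c R), towerCell T B R j

variable {T B} {x : α} {R R' j j' : ℕ}

lemma eq_of_mem_lastVisitSet (h : x ∈ lastVisitSet T B j) (h' : x ∈ lastVisitSet T B j') :
    j = j' := by
  rcases lt_trichotomy j j' with hlt | heq | hlt
  · exact absurd h.1 (h'.2 j hlt)
  · exact heq
  · exact absurd h'.1 (h.2 j' hlt)

lemma eq_of_mem_firstReturnSet {m m' : ℕ} (h : x ∈ firstReturnSet T B m)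
    (h' : x ∈ firstReturnSet T B m') : m = m' := by
  rcases lt_trichotomy m m' with hlt | heq | hlt
  · exact absurd h.1 (h'.2 m hlt)
  · exact heq
  · exact absurd h'.1 (h.2 m' hlt)

lemma eq_of_mem_towerCell (h : x ∈ towerCell T B R j) (h' : x ∈ towerCell T B R' j') :
    R = R' ∧ j = j' := by
  obtain ⟨hjR, hl, hr⟩ := h
  obtain ⟨hjR', hl', hr'⟩ := h'
  have := eq_of_mem_lastVisitSet hl hl'
  have := eq_of_mem_firstReturnSet hr hr'
  omega

lemma disjoint_towerCell (h : R ≠ R' ∨ j ≠ j') :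
    Disjoint (towerCell T B R j) (towerCell T B R' j') :=
  Set.disjoint_left.2 fun _ hx hx' => by have := eq_of_mem_towerCell hx hx'; tauto

lemma towerCell_zero_subset : towerCell T B R 0 ⊆ B := fun _ hx => hx.2.1.1

lemma preimage_towerCell_succ (h : j + 1 < R) :
    T ⁻¹' towerCell T B R (j + 1) = towerCell T B R j := by
  obtain ⟨n, hn⟩ : ∃ n, R - (j + 1) = n + 1 := ⟨R - (j + 2), by omega⟩
  have hn' : R - (j + 1 + 1) = n := by omega
  ext x
  simp only [towerCell, lastVisitSet, firstReturnSet, mem_preimage, mem_ofPred_eq, hn, hn',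
    iterate_succ_apply, iterate_zero_apply, Equiv.symm_apply_apply, Nat.forall_lt_succ_left, h,
    h.trans' (Nat.lt_succ_self j), true_and]
  tauto

lemma exists_mem_towerCell (hpast : ∃ k, (⇑T.symm)^[k] x ∈ B)
    (hfut : ∃ k, (⇑T)^[k + 1] x ∈ B) : ∃ R j, x ∈ towerCell T B R j := by
  classical
  refine ⟨Nat.find hpast + (Nat.find hfut + 1), Nat.find hpast, by omega,
    ⟨Nat.find_spec hpast, fun i hi => Nat.find_min hpast hi⟩, ?_⟩
  rw [show Nat.find hpast + (Nat.find hfut + 1) - (Nat.find hpast + 1) = Nat.find hfut by omega]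
  exact ⟨Nat.find_spec hfut, fun i hi => Nat.find_min hfut hi⟩

lemma mem_towerBottom_iff {c : ℕ → ℕ} (hx : x ∈ towerCell T B R j) :
    x ∈ towerBottom T B c ↔ j < c R := by
  simp only [towerBottom, mem_iUnion, Finset.mem_range, exists_prop]
  refine ⟨fun ⟨R', j', hj', hx'⟩ => ?_, fun hj => ⟨R, j, hj, hx⟩⟩
  obtain ⟨rfl, rfl⟩ := eq_of_mem_towerCell hx' hx
  exact hj'

lemma mem_towerBottom_id : x ∈ towerBottom T B id ↔ ∃ R j, x ∈ towerCell T B R j := by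
  simp only [towerBottom, mem_iUnion, Finset.mem_range, exists_prop, id]
  exact ⟨fun ⟨R, j, _, hx⟩ => ⟨R, j, hx⟩, fun ⟨R, j, hx⟩ => ⟨R, j, hx.1, hx⟩⟩

/-- `T` lifts every point one level up its column, so it can move a point into or out of
`towerBottom T B c` only from the top of a column (then `T x ∈ B`) or from level `c R - 1`. -/
lemma symmDiff_preimage_towerBottom_subset (c : ℕ → ℕ) :
    towerBottom T B c ∆ (T ⁻¹' towerBottom T B c) ⊆
      (towerBottom T B id)ᶜ ∪ T ⁻¹' B ∪ ⋃ R, towerCell T B R (c R - 1) := by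
  intro x hx
  by_contra hout
  simp only [mem_union, mem_compl_iff, not_or, not_not, mem_preimage, mem_iUnion,
    not_exists] at hout
  obtain ⟨⟨hxG, hTx⟩, hD⟩ := hout
  obtain ⟨R, j, hxc⟩ := mem_towerBottom_id.1 hxG
  have hjR : j + 1 < R := by
    by_contra h
    have hR : R - (j + 1) = 0 := by omega
    exact hTx (by simpa [hR] using hxc.2.2.1)
  have hTxc : T x ∈ towerCell T B R (j + 1) := by
    rwa [← mem_preimage, preimage_towerCell_succ hjR]
  rw [mem_symmDiff, mem_preimage, mem_towerBottom_iff hxc, mem_towerBottom_iff hTxc] at hx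
  exact hD R (by convert hxc using 2; omega)

variable {m : MeasurableSpace α} {μ : Measure α}

lemma measurableSet_towerCell (hT : Measurable T) (hT' : Measurable T.symm)
    (hB : MeasurableSet B) (R j : ℕ) : MeasurableSet (towerCell T B R j) := by
  have hTn := hT.iterate
  have hTn' := hT'.iterate
  refine measurableSet_setOfPred.2 ?_
  simp only [lastVisitSet, firstReturnSet, mem_ofPred_eq]
  fun_prop

lemma measurableSet_towerBottom (hT : Measurable T)
    (hT' : Measurable T.symm) (hB : MeasurableSet B) (c : ℕ → ℕ) :
    MeasurableSet (towerBottom T B c) :=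
  .iUnion fun R => Finset.measurableSet_biUnion _ fun j _ => measurableSet_towerCell hT hT' hB R j

lemma measure_towerCell (hT : MeasurePreserving T μ μ) (hT' : Measurable T.symm)
    (hB : MeasurableSet B) (h : j < R) : μ (towerCell T B R j) = μ (towerCell T B R 0) := by
  induction j with
  | zero => rfl
  | succ j ih =>
    rw [← ih (by omega), ← preimage_towerCell_succ h, hT.measure_preimage
      (measurableSet_towerCell hT.measurable hT' hB R (j + 1)).nullMeasurableSet]

lemma measure_towerCell_le (hT : MeasurePreserving T μ μ) (hT' : Measurable T.symm)
    (hB : MeasurableSet B) : μ (towerCell T B R j) ≤ μ (towerCell T B R 0) := by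
  by_cases h : j < R
  · exact (measure_towerCell hT hT' hB h).le
  · simp [towerCell, h]

lemma measure_towerBottom (hT : MeasurePreserving T μ μ) (hT' : Measurable T.symm)
    (hB : MeasurableSet B) {c : ℕ → ℕ} (hc : ∀ R, c R ≤ R) :
    μ (towerBottom T B c) = ∑' R, (c R : ℝ≥0∞) * μ (towerCell T B R 0) := by
  have hm := measurableSet_towerCell hT.measurable hT' hB
  rw [towerBottom, measure_iUnion]
  · refine tsum_congr fun R => ?_
    rw [measure_biUnion_finset (fun j _ j' _ hj => disjoint_towerCell (Or.inr hj))
      fun j _ => hm R j, Finset.sum_congr rfl fun j hj =>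
        measure_towerCell hT hT' hB ((Finset.mem_range.1 hj).trans_le (hc R))]
    simp
  · exact fun R R' hR => disjoint_iUnion₂_left.2 fun j _ => disjoint_iUnion₂_right.2 fun j' _ =>
      disjoint_towerCell (Or.inl hR)
  · exact fun R => Finset.measurableSet_biUnion _ fun j _ => hm R j

lemma tsum_measure_towerCell_zero_le (hT : Measurable T) (hT' : Measurable T.symm)
    (hB : MeasurableSet B) : ∑' R, μ (towerCell T B R 0) ≤ μ B := by
  rw [← measure_iUnion (fun R R' h => disjoint_towerCell (Or.inl h))
    fun R => measurableSet_towerCell hT hT' hB R 0]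
  exact measure_mono (iUnion_subset fun R => towerCell_zero_subset)

lemma ae_mem_towerBottom_id [IsFiniteMeasure μ] (hT : Ergodic T μ) (hT' : Measurable T.symm)
    (hB : MeasurableSet B) (hB0 : μ B ≠ 0) : ∀ᵐ x ∂μ, x ∈ towerBottom T B id := by
  let e : α ≃ᵐ α := ⟨T, hT.measurable, hT'⟩
  have hpast := (Ergodic.symm (e := e) hT).ae_exists_iterate_succ_mem hB hB0
  filter_upwards [hpast, hT.ae_exists_iterate_succ_mem hB hB0] with x ⟨k, hk⟩ hfut
  exact mem_towerBottom_id.2 (exists_mem_towerCell ⟨k + 1, hk⟩ hfut)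

/-- Kac's lemma. -/
lemma tsum_mul_measure_towerCell_zero [IsProbabilityMeasure μ] (hT : Ergodic T μ)
    (hT' : Measurable T.symm) (hB : MeasurableSet B) (hB0 : μ B ≠ 0) :
    ∑' R : ℕ, (R : ℝ≥0∞) * μ (towerCell T B R 0) = 1 := by
  refine (measure_towerBottom (c := id) hT.toMeasurePreserving hT' hB fun _ => le_rfl).symm.trans ?_
  exact (prob_compl_eq_zero_iff (measurableSet_towerBottom hT.measurable hT' hB id)).1
    (ae_mem_towerBottom_id hT hT' hB hB0)

lemma measure_symmDiff_preimage_towerBottom_le [IsFiniteMeasure μ] (hT : Ergodic T μ)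
    (hT' : Measurable T.symm) (hB : MeasurableSet B) (hB0 : μ B ≠ 0) (c : ℕ → ℕ) :
    μ (towerBottom T B c ∆ (T ⁻¹' towerBottom T B c)) ≤ 2 * μ B := by
  have hG : μ (towerBottom T B id)ᶜ = 0 := ae_mem_towerBottom_id hT hT' hB hB0
  calc _ ≤ μ ((towerBottom T B id)ᶜ ∪ T ⁻¹' B ∪ ⋃ R, towerCell T B R (c R - 1)) :=
        measure_mono (symmDiff_preimage_towerBottom_subset c)
    _ ≤ μ (towerBottom T B id)ᶜ + μ (T ⁻¹' B) + ∑' R, μ (towerCell T B R (c R - 1)) :=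
        (measure_union_le _ _).trans (add_le_add (measure_union_le _ _) (measure_iUnion_le _))
    _ ≤ 0 + μ B + ∑' R, μ (towerCell T B R 0) := by
        rw [hG, hT.measure_preimage hB.nullMeasurableSet]
        exact add_le_add_right
          (ENNReal.tsum_le_tsum fun R => measure_towerCell_le hT.toMeasurePreserving hT' hB) _
    _ ≤ 2 * μ B := by
        rw [zero_add, two_mul]
        gcongr
        exact tsum_measure_towerCell_zero_le hT.measurable hT' hB

end Tower

section Construction

variable {α : Type*} {m : MeasurableSpace α} {μ : Measure α} {T : Equiv.Perm α} {B : Set α}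

lemma measure_towerBottom_ceil_mem_Icc [IsProbabilityMeasure μ] (hT : Ergodic T μ)
    (hT' : Measurable T.symm) (hB : MeasurableSet B) (hB0 : μ B ≠ 0) {ρ : ℝ≥0} (hρ : ρ ≤ 1) :
    μ (towerBottom T B fun R => ⌈ρ * R⌉₊) ∈ Icc (ρ : ℝ≥0∞) (ρ + μ B) := by
  have hceil : ∀ R : ℕ, (ρ : ℝ≥0∞) * R ≤ ⌈ρ * R⌉₊ ∧ (⌈ρ * R⌉₊ : ℝ≥0∞) ≤ ρ * R + 1 := fun R =>
    ⟨by exact_mod_cast Nat.le_ceil _, by exact_mod_cast (Nat.ceil_lt_add_one (by positivity)).le⟩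
  have hKac := tsum_mul_measure_towerCell_zero hT hT' hB hB0
  rw [measure_towerBottom hT.toMeasurePreserving hT' hB fun R =>
    Nat.ceil_le.2 (mul_le_of_le_one_left R.cast_nonneg hρ)]
  constructor
  · calc (ρ : ℝ≥0∞) = ∑' R : ℕ, ρ * (R * μ (towerCell T B R 0)) := by
          rw [ENNReal.tsum_mul_left, hKac, mul_one]
      _ ≤ _ := ENNReal.tsum_le_tsum fun R => by rw [← mul_assoc]; gcongr; exact (hceil R).1
  · calc ∑' R : ℕ, (⌈ρ * R⌉₊ : ℝ≥0∞) * μ (towerCell T B R 0)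
        ≤ ∑' R : ℕ, (ρ * (R * μ (towerCell T B R 0)) + μ (towerCell T B R 0)) :=
          ENNReal.tsum_le_tsum fun R => by
            grw [(hceil R).2, add_mul, one_mul, mul_assoc]
      _ = ρ + ∑' R : ℕ, μ (towerCell T B R 0) := by
          rw [ENNReal.tsum_add, ENNReal.tsum_mul_left, hKac, mul_one]
      _ ≤ ρ + μ B := by gcongr; exact tsum_measure_towerCell_zero_le hT.measurable hT' hB

theorem exists_measure_eq_measure_symmDiff_preimage_le [IsProbabilityMeasure μ]
    (hT : Ergodic T μ) (hT' : Measurable T.symm) {C : MeasurableSpace α} (hCle : C ≤ m)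
    (hTC : Measurable[C, C] T) (hTC' : Measurable[C, C] T.symm) (hCna : IsNonatomicOn μ C)
    (hB : MeasurableSet[C] B) (hB0 : μ B ≠ 0) {ρ : ℝ≥0} (hρ : ρ ≤ 1) :
    ∃ A, MeasurableSet[C] A ∧ μ A = ρ ∧ μ (A ∆ (T ⁻¹' A)) ≤ 4 * μ B := by
  set A₀ := towerBottom T B fun R => ⌈ρ * R⌉₊
  have hBm : MeasurableSet[m] B := hCle _ hB
  have hA₀ : MeasurableSet[C] A₀ := measurableSet_towerBottom hTC hTC' hB _
  obtain ⟨hlow, hup⟩ := measure_towerBottom_ceil_mem_Icc hT hT' hBm hB0 hρ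
  obtain ⟨E, hE, hEA, hμE⟩ := exists_subset_measure_eq hCle hCna hA₀ (r := μ A₀ - ρ) tsub_le_self
  have hEB : μ E ≤ μ B := by rw [hμE, tsub_le_iff_left]; exact hup
  refine ⟨A₀ \ E, hA₀.diff hE, ?_, ?_⟩
  · rw [measure_sdiff hEA (hCle _ hE).nullMeasurableSet (measure_ne_top _ _), hμE,
      ENNReal.sub_sub_cancel (measure_ne_top _ _) hlow]
  · calc μ ((A₀ \ E) ∆ (T ⁻¹' (A₀ \ E))) ≤ μ (A₀ ∆ (T ⁻¹' A₀)) + 2 * μ E :=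
          hT.toMeasurePreserving.measure_symmDiff_preimage_sdiff_le (hCle _ hE).nullMeasurableSet
      _ ≤ 2 * μ B + 2 * μ B := by
          gcongr
          exact measure_symmDiff_preimage_towerBottom_le hT hT' hBm hB0 _
      _ = 4 * μ B := by ring

end Construction

theorem exists_quasi_invariant_set_general
    {Ω : Type*} [m0 : MeasurableSpace Ω] (μ : Measure Ω) [IsProbabilityMeasure μ]
    (T : Equiv.Perm Ω) (hTinv : Measurable T.symm)
    (hTmp : MeasurePreserving T μ μ)
    (herg : ∀ A : Set Ω, MeasurableSet A → ⇑T ⁻¹' A = A → μ A = 0 ∨ μ A = 1)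
    (C : MeasurableSpace Ω) (hCle : C ≤ m0)
    (hCT : MeasurableSpace.comap T C = C)
    (hCna : ∀ A : Set Ω, MeasurableSet[C] A → 0 < μ A →
      ∃ B : Set Ω, MeasurableSet[C] B ∧ B ⊆ A ∧ 0 < μ B ∧ μ B < μ A)
    (N : ℕ) (ρ : ℝ) (hρ1 : ρ < 1) (ε : ℝ) (hε : 0 < ε) :
    ∃ A : Set Ω, MeasurableSet[C] A ∧ μ A = ENNReal.ofReal ρ ∧
      ∀ i ≤ N, ∀ j ≤ N,
        μ (symmDiff (⇑(T ^ i) ⁻¹' A) (⇑(T ^ j) ⁻¹' A)) ≤ ENNReal.ofReal ε := by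
  have hTC : Measurable[C, C] T := measurable_iff_comap_le.2 hCT.le
  have hTC' : Measurable[C, C] T.symm := measurable_iff_comap_le.2 <| by
    conv_lhs => rw [← hCT]
    rw [MeasurableSpace.comap_comp, T.self_comp_symm, MeasurableSpace.comap_id]
  obtain ⟨B, hB, -, hB0, hBε⟩ := exists_subset_measure_pos_le hCle hCna MeasurableSet.univ
    (by simp) (c := ENNReal.ofReal ε / (4 * N))
    (ENNReal.div_pos (ENNReal.ofReal_pos.2 hε).ne' (by finiteness))
  obtain ⟨A, hA, hμA, hAT⟩ := exists_measure_eq_measure_symmDiff_preimage_le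
    (ergodic_of_measure_eq_zero_or_one hTmp herg) hTinv hCle hTC hTC' hCna hB hB0.ne'
    (Real.toNNReal_le_one.2 hρ1.le)
  refine ⟨A, hA, hμA, fun i hi j hj => ?_⟩
  rw [Equiv.Perm.coe_pow, Equiv.Perm.coe_pow]
  calc _ ≤ N * μ (A ∆ (T ⁻¹' A)) :=
        hTmp.measure_symmDiff_preimage_iterate_iterate_le (hCle _ hA).nullMeasurableSet hi hj
    _ ≤ N * (4 * μ B) := by gcongr
    _ = 4 * N * μ B := by ring
    _ ≤ 4 * N * (ENNReal.ofReal ε / (4 * N)) := by gcongr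
    _ ≤ ENNReal.ofReal ε := ENNReal.mul_div_le

/-- Lemma 1: In an ergodic dynamical system, if `𝒞` is a `T`-invariant
sub-σ-algebra on which `μ` is non-atomic, then for every `N ∈ ℕ`, `0 < ρ < 1` and
`ε > 0` there is a set `A ∈ 𝒞` with `μ(A) = ρ` and
`μ(T^{-i}A Δ T^{-j}A) ≤ ε` for all `i, j ∈ {0, …, N}`. -/
theorem exists_quasi_invariant_set
    {Ω : Type*} [m0 : MeasurableSpace Ω] (μ : Measure Ω) [IsProbabilityMeasure μ]
    (T : Equiv.Perm Ω) (hT : Measurable T) (hTinv : Measurable T.symm)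
    (hTmp : MeasurePreserving T μ μ)
    (herg : ∀ A : Set Ω, MeasurableSet A → ⇑T ⁻¹' A = A → μ A = 0 ∨ μ A = 1)
    (C : MeasurableSpace Ω) (hCle : C ≤ m0)
    (hCT : MeasurableSpace.comap T C = C)
    (hCna : ∀ A : Set Ω, MeasurableSet[C] A → 0 < μ A →
      ∃ B : Set Ω, MeasurableSet[C] B ∧ B ⊆ A ∧ 0 < μ B ∧ μ B < μ A)
    (N : ℕ) (ρ : ℝ) (hρ0 : 0 < ρ) (hρ1 : ρ < 1) (ε : ℝ) (hε : 0 < ε) :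
    ∃ A : Set Ω, MeasurableSet[C] A ∧ μ A = ENNReal.ofReal ρ ∧
      ∀ i ≤ N, ∀ j ≤ N,
        μ (symmDiff (⇑(T ^ i) ⁻¹' A) (⇑(T ^ j) ⁻¹' A)) ≤ ENNReal.ofReal ε :=
  exists_quasi_invariant_set_general (m0 := m0) μ T hTinv hTmp herg C hCle hCT hCna N ρ hρ1 ε hε
end
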